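/- In the limit ν → ∞ of the '2/3' fake superpotential, the function W(φ;∞) = -((d-1)/(κ²l)) (1-ρ²)^{-3/4}, with ρ = tanh((2/3)√(dκ²/(d-1)) φ), satisfies V(φ) = (1/2)(W'² - (dκ²/(d-1)) W²) for V(φ) = -(d(d-1)/(2κ²l²)) cosh((2/3)√(dκ²/(d-1)) φ), and has expansion W(φ;∞) = -((d-1)/(κ²l))(1 + ψ²/3 + O(ψ⁴)) with ψ = √(dκ²/(d-1)) φ. -/

import Mathlib

/-!
Since `1 - tanh² y = cosh⁻² y`, the superpotential is `W = -A cosh(a φ)^(3/2)` with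
`a = 2c/3`, `c² = dκ²/(d-1)`, `A = (d-1)/(κ²l)`. For `w = b cosh(a x)^p` one has
`w'² - (p a)² w² = -(b p a)² cosh(a x)^(2(p-1))` because `sinh² - cosh² = -1`; at `p = 3/2`
the right side is a multiple of `cosh(a φ)`, which is `V`.

For the expansion, `cosh u = 1 + u²/2 + O(u⁴)` (the complex cosine bound at `u i`) and the
two-sided Bernoulli estimate `0 ≤ (1+t)^p - (1+pt) ≤ (p-1)t²` for `1 ≤ p ≤ 2`, applied at
`t = cosh u - 1 = O(u²)`, give `cosh u ^ p = 1 + (p/2) u² + O(u⁴)`.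
-/

open Real Filter Topology Asymptotics

lemma one_sub_tanh_sq (y : ℝ) : 1 - tanh y ^ 2 = (cosh y ^ 2)⁻¹ := by
  have h := cosh_sq_sub_sinh_sq y
  rw [tanh_eq_sinh_div_cosh]
  field_simp
  linarith

lemma one_sub_tanh_sq_rpow_neg (y s : ℝ) : (1 - tanh y ^ 2) ^ (-s) = cosh y ^ (2 * s) := by
  have hcosh : 0 ≤ cosh y := (cosh_pos y).le
  rw [one_sub_tanh_sq, inv_rpow (by positivity), rpow_neg (by positivity), inv_inv,
    ← rpow_natCast_mul hcosh, Nat.cast_ofNat]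

lemma hasDerivAt_const_mul_cosh_mul_rpow (a b p x : ℝ) :
    HasDerivAt (fun x => b * cosh (a * x) ^ p)
      (b * (sinh (a * x) * a * p * cosh (a * x) ^ (p - 1))) x := by
  have hlin : HasDerivAt (fun x => a * x) a x := by
    simpa using (hasDerivAt_id x).const_mul a
  exact (((hasDerivAt_cosh _).comp x hlin).rpow_const (Or.inl (cosh_pos _).ne')).const_mul b

lemma deriv_sq_sub_sq_const_mul_cosh_mul_rpow (a b p x : ℝ) :
    deriv (fun x => b * cosh (a * x) ^ p) x ^ 2 - (p * a) ^ 2 * (b * cosh (a * x) ^ p) ^ 2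
      = -(b * p * a) ^ 2 * cosh (a * x) ^ (2 * (p - 1)) := by
  have hcosh : 0 < cosh (a * x) := cosh_pos _
  have hsinh : sinh (a * x) ^ 2 = cosh (a * x) ^ 2 - 1 := by
    linarith [cosh_sq_sub_sinh_sq (a * x)]
  have hpow : cosh (a * x) ^ p = cosh (a * x) ^ (p - 1) * cosh (a * x) := by
    rw [← rpow_add_one hcosh.ne', sub_add_cancel]
  have hpow2 : cosh (a * x) ^ (2 * (p - 1)) = (cosh (a * x) ^ (p - 1)) ^ 2 := by
    rw [mul_comm 2, rpow_mul hcosh.le, rpow_two]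
  rw [(hasDerivAt_const_mul_cosh_mul_rpow a b p x).deriv, hpow, hpow2]
  linear_combination (b * p * a * cosh (a * x) ^ (p - 1)) ^ 2 * hsinh

lemma abs_cosh_sub_le {u : ℝ} (hu : |u| ≤ 1) :
    |cosh u - (1 + u ^ 2 / 2)| ≤ |u| ^ 4 * (5 / 96) := by
  have h := Complex.cos_bound (x := u * Complex.I) (by simpa using hu)
  have hreal : Complex.cosh u - (1 - (u : ℂ) ^ 2 * -1 / 2) =
      ((cosh u - (1 + u ^ 2 / 2) : ℝ) : ℂ) := by
    push_cast
    ring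
  rwa [Complex.cos_mul_I, mul_pow, Complex.I_sq, hreal, Complex.norm_real, norm_eq_abs,
    Complex.norm_mul, Complex.norm_I, mul_one, Complex.norm_real, norm_eq_abs] at h

lemma cosh_sub_isBigO : (fun u => cosh u - (1 + u ^ 2 / 2)) =O[𝓝 0] fun u => u ^ 4 := by
  refine IsBigO.of_bound (5 / 96) ?_
  filter_upwards [Metric.closedBall_mem_nhds (0 : ℝ) one_pos] with u hu
  rw [Metric.mem_closedBall, dist_zero_right] at hu
  simpa [norm_eq_abs, mul_comm] using abs_cosh_sub_le hu

lemma abs_one_add_rpow_sub_le {p t : ℝ} (hp1 : 1 ≤ p) (hp2 : p ≤ 2) (ht : -1 ≤ t) :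
    |(1 + t) ^ p - (1 + p * t)| ≤ (p - 1) * t ^ 2 := by
  have hlower : 1 + p * t ≤ (1 + t) ^ p := one_add_mul_self_le_rpow_one_add ht hp1
  have hsplit : (1 + t) ^ p = (1 + t) * (1 + t) ^ (p - 1) := by
    rw [← rpow_one_add' (by linarith) (by linarith), add_sub_cancel]
  have hupper : (1 + t) ^ (p - 1) ≤ 1 + (p - 1) * t :=
    rpow_one_add_le_one_add_mul_self ht (by linarith) (by linarith)
  have hupper' : (1 + t) ^ p ≤ 1 + p * t + (p - 1) * t ^ 2 := by
    rw [hsplit]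
    nlinarith [mul_le_mul_of_nonneg_left hupper (show 0 ≤ 1 + t by linarith)]
  rw [abs_of_nonneg (by linarith)]
  linarith

lemma cosh_rpow_sub_isBigO {p : ℝ} (hp1 : 1 ≤ p) (hp2 : p ≤ 2) :
    (fun u => cosh u ^ p - (1 + p / 2 * u ^ 2)) =O[𝓝 0] fun u => u ^ 4 := by
  have hbernoulli : (fun u => cosh u ^ p - (1 + p * (cosh u - 1))) =O[𝓝 0]
      fun u => (cosh u - 1) ^ 2 := by
    refine IsBigO.of_bound (p - 1) (Eventually.of_forall fun u => ?_)
    have h := abs_one_add_rpow_sub_le hp1 hp2 (t := cosh u - 1) (by linarith [one_le_cosh u])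
    rw [add_sub_cancel] at h
    simpa [norm_eq_abs] using h
  have hcosh_sub_one : (fun u => cosh u - 1) =O[𝓝 0] fun u => u ^ 2 :=
    ((cosh_sub_isBigO.trans (isLittleO_pow_pow (by norm_num)).isBigO).add
      ((isBigO_refl _ _).const_mul_left (1 / 2))).congr_left fun u => by ring
  have hsq : (fun u => (cosh u - 1) ^ 2) =O[𝓝 0] fun u => u ^ 4 :=
    (hcosh_sub_one.pow 2).congr_right fun u => by ring
  refine ((hbernoulli.trans hsq).add (cosh_sub_isBigO.const_mul_left p)).congr_left
    fun u => by ring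

/-- In the limit ν → ∞, the '2/3' fake superpotential
W(φ;∞) = -((d-1)/(κ²l)) (1-ρ²)^{-3/4}, ρ = tanh((2/3)√(dκ²/(d-1)) φ), satisfies
V = (1/2)(W'² - (dκ²/(d-1)) W²) for V(φ) = -(d(d-1)/(2κ²l²)) cosh((2/3)√(dκ²/(d-1)) φ),
and has the expansion W(φ;∞) = -((d-1)/(κ²l))(1 + ψ²/3 + O(ψ⁴)), ψ = √(dκ²/(d-1)) φ. -/
theorem stmt8 (d κ l : ℝ) (hd : 1 < d) (hκ : 0 < κ) (hl : 0 < l)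
    (V W ρ ψ : ℝ → ℝ)
    (hρ : ∀ φ, ρ φ = Real.tanh ((2 / 3) * Real.sqrt (d * κ ^ 2 / (d - 1)) * φ))
    (hψ : ∀ φ, ψ φ = Real.sqrt (d * κ ^ 2 / (d - 1)) * φ)
    (hV : ∀ φ, V φ = -(d * (d - 1) / (2 * κ ^ 2 * l ^ 2)) *
      Real.cosh ((2 / 3) * Real.sqrt (d * κ ^ 2 / (d - 1)) * φ))
    (hW : ∀ φ, W φ = -((d - 1) / (κ ^ 2 * l)) * (1 - ρ φ ^ 2) ^ (-(3 : ℝ) / 4)) :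
    (∀ φ : ℝ, V φ = (1 / 2) * ((deriv W φ) ^ 2 - (d * κ ^ 2 / (d - 1)) * (W φ) ^ 2)) ∧
    (fun φ => W φ - (-((d - 1) / (κ ^ 2 * l)) * (1 + ψ φ ^ 2 / 3)))
      =O[nhds 0] fun φ => ψ φ ^ 4 := by
  set c := √(d * κ ^ 2 / (d - 1))
  set A := (d - 1) / (κ ^ 2 * l) with hA
  have hc : c ^ 2 = d * κ ^ 2 / (d - 1) := sq_sqrt (div_nonneg (by positivity) (by linarith))
  have hAc : (A * c) ^ 2 = d * (d - 1) / (κ ^ 2 * l ^ 2) := by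
    rw [hA, mul_pow, hc]
    field_simp [(sub_pos.2 hd).ne']
  clear_value c A
  have hW' : W = fun φ => -A * cosh (2 / 3 * c * φ) ^ (3 / 2 : ℝ) := by
    ext φ
    rw [hW, hρ, neg_div, one_sub_tanh_sq_rpow_neg]
    norm_num
  refine ⟨fun φ => ?_, ?_⟩
  · have key := deriv_sq_sub_sq_const_mul_cosh_mul_rpow (2 / 3 * c) (-A) (3 / 2) φ
    rw [show (3 / 2 : ℝ) * (2 / 3 * c) = c by ring, show (2 : ℝ) * (3 / 2 - 1) = 1 by norm_num,
      rpow_one, hc, show (-A * (3 / 2) * (2 / 3 * c)) ^ 2 = (A * c) ^ 2 by ring, hAc] at key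
    rw [hV, hW']
    linear_combination (-1 / 2) * key
  · have hscale : Tendsto (fun φ => 2 / 3 * c * φ) (𝓝 0) (𝓝 0) :=
      (continuous_const_mul _).tendsto' 0 0 (mul_zero _)
    have hψ4 : (fun φ => (2 / 3 * c * φ) ^ 4) =O[𝓝 0] fun φ => ψ φ ^ 4 :=
      ((isBigO_refl _ _).const_mul_left ((2 / 3) ^ 4)).congr_left fun φ => by rw [hψ]; ring
    refine ((((cosh_rpow_sub_isBigO (p := 3 / 2) (by norm_num) (by norm_num)).comp_tendsto
      hscale).const_mul_left (-A)).trans hψ4).congr_left fun φ => ?_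
    simp only [Function.comp_apply, hW', hψ]
    ring
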